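/- (Proposition 3.2, explicit form) Let U ⊆ ℂ be open and a, μ : U → ℂ holomorphic with μ(w) ≠ 0 and |a(w)| < 1 for all w ∈ U. Define the normal Gauss map τ : U → ℝ⁴ by τ = (1/(1−|a|²))·(1+|a|², a+conj(a), −i(a−conj(a)), 0) (a real vector, with values in the hyperboloid ℍ²), and set η = a'/(conj(μ)(1−|a|²)²). Then the Weingarten equation τ_w = η·conj(μ·W(a,a)) holds componentwise on U, where W(a,a) = (2a, 1+a², i(1−a²), 0), and moreover |η|² = |a'|²/(|μ|²(1−|a|²)⁴), which equals the Gauss curvature K = −(1/λ²)Δ ln λ of the induced metric with λ² = 4|μ|²(1−|a|²)². -/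

import Mathlib

open Complex ComplexConjugate

/-- The Weierstrass vector `W(a,b) = (a+b, 1+ab, i(1-ab), a-b) ∈ ℂ⁴`. -/
noncomputable def W (a b : ℂ) : Fin 4 → ℂ := ![a + b, 1 + a * b, I * (1 - a * b), a - b]

/-- The Wirtinger derivative `g_w = (1/2)(g_u − i g_v)` of a map `g : ℂ → E`. -/
noncomputable def wd {E : Type*} [NormedAddCommGroup E] [NormedSpace ℂ E]
    (g : ℂ → E) (w : ℂ) : E :=
  (2⁻¹ : ℂ) • (fderiv ℝ g w 1 - Complex.I • fderiv ℝ g w Complex.I)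

/-- The Euclidean Laplacian `Δf = f_uu + f_vv` of `f : ℂ → ℝ`, `w = u + iv`. -/
noncomputable def lap (f : ℂ → ℝ) (w : ℂ) : ℝ :=
  fderiv ℝ (fun z => fderiv ℝ f z 1) w 1 +
    fderiv ℝ (fun z => fderiv ℝ f z Complex.I) w Complex.I

open Topology

/-!
Everything is a Wirtinger computation. With `s = 1 - |a|²`, the components of `τ` are `s⁻¹`
times polynomials in `a, ā`; as `a` is holomorphic, `∂_w τ = a' s⁻² (2ā, 1 + ā², -i(1 - ā²), 0)`,
which is `a' s⁻² · conj W(a,a)`. For the curvature, `log λ = log 2 + log |μ| + log s` with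
`log |μ|` harmonic, and `Δ log s = 4 ∂_w̄ ∂_w log s = -4 |a'|² / s²`.
-/

/-- The real differential of a map with `f_w = p` and `f_w̄ = q`. -/
noncomputable def wirtingerCLM (p q : ℂ) : ℂ →L[ℝ] ℂ :=
  p • ContinuousLinearMap.id ℝ ℂ + q • conjCLE.toContinuousLinearMap

@[simp] lemma wirtingerCLM_apply (p q v : ℂ) : wirtingerCLM p q v = p * v + q * conj v := by
  simp [wirtingerCLM, smul_eq_mul]

def HasWirtingerAt (f : ℂ → ℂ) (p q z : ℂ) : Prop :=
  HasFDerivAt f (wirtingerCLM p q) z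

/-- The differential of a real function `f` with `f_w = c / 2`. -/
noncomputable def reMulCLM (c : ℂ) : ℂ →L[ℝ] ℝ :=
  reCLM.comp (wirtingerCLM c 0)

@[simp] lemma reMulCLM_apply (c v : ℂ) : reMulCLM c v = (c * v).re := by
  simp [reMulCLM]

lemma real_smul_reMulCLM (t : ℝ) (c : ℂ) : t • reMulCLM c = reMulCLM (t * c) := by
  ext v
  simp [mul_assoc]

namespace HasWirtingerAt

variable {f g : ℂ → ℂ} {p q r s z : ℂ}

lemma congr_deriv (h : HasWirtingerAt f p q z) {p' q' : ℂ} (hp : p = p') (hq : q = q') :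
    HasWirtingerAt f p' q' z :=
  hp ▸ hq ▸ h

lemma differentiableAt (h : HasWirtingerAt f p q z) : DifferentiableAt ℝ f z :=
  HasFDerivAt.differentiableAt h

lemma wd_eq (h : HasWirtingerAt f p q z) : wd f z = p := by
  rw [wd, HasFDerivAt.fderiv h]
  simp only [wirtingerCLM_apply, map_one, conj_I, smul_eq_mul]
  linear_combination (q - p) / 2 * I_sq

lemma star (h : HasWirtingerAt f p q z) :
    HasWirtingerAt (fun x => conj (f x)) (conj q) (conj p) z := by
  refine (conjCLE.toContinuousLinearMap.hasFDerivAt.comp z h).congr_fderiv ?_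
  ext v
  simp only [ContinuousLinearMap.comp_apply, ContinuousLinearEquiv.coe_coe, conjCLE_apply,
    wirtingerCLM_apply, map_add, map_mul, conj_conj]
  ring

lemma add (hf : HasWirtingerAt f p q z) (hg : HasWirtingerAt g r s z) :
    HasWirtingerAt (fun x => f x + g x) (p + r) (q + s) z := by
  refine (HasFDerivAt.add hf hg).congr_fderiv ?_
  ext v
  simp only [add_apply, wirtingerCLM_apply]
  ring

lemma sub (hf : HasWirtingerAt f p q z) (hg : HasWirtingerAt g r s z) :
    HasWirtingerAt (fun x => f x - g x) (p - r) (q - s) z := by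
  refine (HasFDerivAt.sub hf hg).congr_fderiv ?_
  ext v
  simp only [sub_apply, wirtingerCLM_apply]
  ring

lemma mul (hf : HasWirtingerAt f p q z) (hg : HasWirtingerAt g r s z) :
    HasWirtingerAt (fun x => f x * g x) (p * g z + f z * r) (q * g z + f z * s) z := by
  refine (HasFDerivAt.mul hf hg).congr_fderiv ?_
  ext v
  simp only [add_apply, smul_apply, wirtingerCLM_apply, smul_eq_mul]
  ring

lemma inv (hf : HasWirtingerAt f p q z) (hz : f z ≠ 0) :
    HasWirtingerAt (fun x => (f x)⁻¹) (-(p / f z ^ 2)) (-(q / f z ^ 2)) z := by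
  refine ((hasFDerivAt_inv' hz).comp z hf).congr_fderiv ?_
  ext v
  simp only [ContinuousLinearMap.comp_apply, neg_apply, ContinuousLinearMap.mulLeftRight_apply,
    wirtingerCLM_apply]
  field_simp
  ring

lemma div (hf : HasWirtingerAt f p q z) (hg : HasWirtingerAt g r s z) (hz : g z ≠ 0) :
    HasWirtingerAt (fun x => f x / g x)
      (p / g z - f z * r / g z ^ 2) (q / g z - f z * s / g z ^ 2) z := by
  simp only [div_eq_mul_inv]
  exact (hf.mul (hg.inv hz)).congr_deriv (by ring) (by ring)

lemma hasFDerivAt_log_re (h : HasWirtingerAt f p q z) (hz : 0 < (f z).re) :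
    HasFDerivAt (fun x => Real.log (f x).re)
      (reMulCLM (((f z).re : ℂ)⁻¹ * (p + conj q))) z := by
  refine ((Real.hasDerivAt_log hz.ne').comp_hasFDerivAt z
    (reCLM.hasFDerivAt.comp z h)).congr_fderiv ?_
  ext v
  simp [mul_re, conj_re, conj_im]
  field_simp
  ring

end HasWirtingerAt

lemma hasWirtingerAt_const (k z : ℂ) : HasWirtingerAt (fun _ => k) 0 0 z :=
  (hasFDerivAt_const k z).congr_fderiv (by ext v; simp)

lemma DifferentiableAt.hasWirtingerAt {f : ℂ → ℂ} {z : ℂ} (h : DifferentiableAt ℂ f z) :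
    HasWirtingerAt f (deriv f z) 0 z :=
  (h.hasDerivAt.hasFDerivAt.restrictScalars ℝ).congr_fderiv (by ext v; simp [mul_comm])

lemma wd_eq_of_forall_hasWirtingerAt {n : ℕ} {g : ℂ → Fin n → ℂ} {p : Fin n → ℂ} {w : ℂ}
    (h : ∀ i, ∃ q, HasWirtingerAt (fun z => g z i) (p i) q w) : wd g w = p := by
  choose q hq using h
  have hg : ∀ i, DifferentiableAt ℝ (fun z => g z i) w := fun i => (hq i).differentiableAt
  funext i
  rw [← (hq i).wd_eq, wd, wd, fderiv_pi hg]
  rfl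

/-- Since `Δ = 4 ∂_w̄ ∂_w` and `c = 2 f_w`, the Laplacian of `f` is `2 c_w̄`, which is real. -/
lemma lap_eq_two_mul_re {f : ℂ → ℝ} {c : ℂ → ℂ} {p q w : ℂ}
    (hf : ∀ᶠ z in 𝓝 w, HasFDerivAt f (reMulCLM (c z)) z) (hc : HasWirtingerAt c p q w) :
    lap f w = 2 * q.re := by
  have h1 : (fun z => fderiv ℝ f z 1) =ᶠ[𝓝 w] fun z => (c z).re := by
    filter_upwards [hf] with z hz
    simp [hz.fderiv]
  have hI : (fun z => fderiv ℝ f z I) =ᶠ[𝓝 w] fun z => (c z * I).re := by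
    filter_upwards [hf] with z hz
    simp [hz.fderiv]
  have d1 : HasFDerivAt (fun z => (c z).re) _ w := reCLM.hasFDerivAt.comp w hc
  have dI : HasFDerivAt (fun z => (c z * I).re) _ w :=
    reCLM.hasFDerivAt.comp w (hc.mul (hasWirtingerAt_const I w))
  rw [lap, h1.fderiv_eq, hI.fderiv_eq, d1.fderiv, dI.fderiv]
  simp [mul_re, mul_im]
  ring

lemma one_sub_mul_conj_ne_zero {x : ℂ} (hx : ‖x‖ < 1) : 1 - x * conj x ≠ 0 := by
  rw [mul_conj', ← ofReal_pow, ← ofReal_one, ← ofReal_sub, ofReal_ne_zero, sub_ne_zero]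
  exact (pow_lt_one₀ (norm_nonneg _) hx two_ne_zero).ne'

noncomputable def normalGaussMap (a : ℂ → ℂ) (w : ℂ) : Fin 4 → ℂ :=
  ((1 : ℂ) / (1 - (‖a w‖ : ℂ) ^ 2)) •
    ![1 + (‖a w‖ : ℂ) ^ 2, a w + conj (a w), -I * (a w - conj (a w)), 0]

lemma wd_normalGaussMap {a : ℂ → ℂ} {w : ℂ} (ha : DifferentiableAt ℂ a w) (ha1 : ‖a w‖ < 1) :
    wd (normalGaussMap a) w =
      (deriv a w / (1 - (‖a w‖ : ℂ) ^ 2) ^ 2) • fun i => conj (W (a w) (a w) i) := by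
  have hs := one_sub_mul_conj_ne_zero ha1
  have hτ : normalGaussMap a = fun z i => (1 - a z * conj (a z))⁻¹ *
      ![1 + a z * conj (a z), a z + conj (a z), -I * (a z - conj (a z)), 0] i := by
    funext z i
    simp [normalGaussMap, mul_conj']
  have HA := ha.hasWirtingerAt
  have HN := HA.mul HA.star
  have Hs := ((hasWirtingerAt_const 1 w).sub HN).inv hs
  rw [hτ, ← mul_conj']
  refine wd_eq_of_forall_hasWirtingerAt fun i => ?_
  fin_cases i
  · exact ⟨_, (Hs.mul ((hasWirtingerAt_const 1 w).add HN)).congr_deriv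
      (by simp [W]; field_simp; ring) rfl⟩
  · exact ⟨_, (Hs.mul (HA.add HA.star)).congr_deriv
      (by simp [W]; field_simp; ring) rfl⟩
  · exact ⟨_, (Hs.mul ((hasWirtingerAt_const (-I) w).mul (HA.sub HA.star))).congr_deriv
      (by simp [W]; field_simp; ring) rfl⟩
  · exact ⟨_, (Hs.mul (hasWirtingerAt_const 0 w)).congr_deriv (by simp [W]) rfl⟩

lemma hasFDerivAt_log_conformalFactor {a μ : ℂ → ℂ} {z : ℂ} (ha : DifferentiableAt ℂ a z)
    (hμ : DifferentiableAt ℂ μ z) (hμ0 : μ z ≠ 0) (ha1 : ‖a z‖ < 1) :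
    HasFDerivAt (fun x => Real.log √(4 * ‖μ x‖ ^ 2 * (1 - ‖a x‖ ^ 2) ^ 2))
      (reMulCLM (deriv μ z / μ z - 2 * (conj (a z) * deriv a z) / (1 - a z * conj (a z)))) z := by
  set G : ℂ → ℂ := fun x =>
    4 * (μ x * conj (μ x)) * ((1 - a x * conj (a x)) * (1 - a x * conj (a x)))
  have hG : ∀ x, G x = ((4 * ‖μ x‖ ^ 2 * (1 - ‖a x‖ ^ 2) ^ 2 : ℝ) : ℂ) := by
    intro x
    simp only [G, mul_conj']
    push_cast
    ring
  have hlog : (fun x => Real.log √(4 * ‖μ x‖ ^ 2 * (1 - ‖a x‖ ^ 2) ^ 2)) =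
      fun x => (2⁻¹ : ℝ) * Real.log (G x).re := by
    funext x
    rw [hG, ofReal_re, Real.log_sqrt (by positivity)]
    ring
  have hGz : ((G z).re : ℂ) = G z := by rw [hG, ofReal_re]
  have hpos : 0 < (G z).re := by
    have hs : 0 < 1 - ‖a z‖ ^ 2 := by nlinarith [norm_nonneg (a z)]
    have hμ' : 0 < ‖μ z‖ := norm_pos_iff.2 hμ0
    rw [hG, ofReal_re]
    positivity
  have hμ0' : conj (μ z) ≠ 0 := (map_ne_zero _).2 hμ0
  have hs := one_sub_mul_conj_ne_zero ha1
  have HA := ha.hasWirtingerAt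
  have HM := hμ.hasWirtingerAt
  have HS := (hasWirtingerAt_const 1 z).sub (HA.mul HA.star)
  have HG : HasWirtingerAt G _ _ z :=
    ((hasWirtingerAt_const 4 z).mul (HM.mul HM.star)).mul (HS.mul HS)
  rw [hlog]
  refine ((HG.hasFDerivAt_log_re hpos).const_mul 2⁻¹).congr_fderiv ?_
  rw [real_smul_reMulCLM, hGz]
  congr 1
  simp only [G, map_add, map_mul, map_sub, map_zero, map_one, map_ofNat, conj_conj]
  push_cast
  field_simp
  ring

lemma lap_log_conformalFactor {a μ : ℂ → ℂ} {w : ℂ}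
    (ha : ∀ᶠ z in 𝓝 w, DifferentiableAt ℂ a z) (hμ : ∀ᶠ z in 𝓝 w, DifferentiableAt ℂ μ z)
    (hμ0 : ∀ᶠ z in 𝓝 w, μ z ≠ 0) (ha1 : ∀ᶠ z in 𝓝 w, ‖a z‖ < 1) :
    lap (fun z => Real.log √(4 * ‖μ z‖ ^ 2 * (1 - ‖a z‖ ^ 2) ^ 2)) w =
      -4 * ‖deriv a w‖ ^ 2 / (1 - ‖a w‖ ^ 2) ^ 2 := by
  have hs := one_sub_mul_conj_ne_zero ha1.self_of_nhds
  have HA := ha.self_of_nhds.hasWirtingerAt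
  have HA' := (analyticAt_iff_eventually_differentiableAt.2 ha).deriv.differentiableAt.hasWirtingerAt
  have HM := hμ.self_of_nhds.hasWirtingerAt
  have HM' := (analyticAt_iff_eventually_differentiableAt.2 hμ).deriv.differentiableAt.hasWirtingerAt
  have Hc := (HM'.div HM hμ0.self_of_nhds).sub
    (((hasWirtingerAt_const 2 w).mul (HA.star.mul HA')).div
      ((hasWirtingerAt_const 1 w).sub (HA.mul HA.star)) hs)
  rw [lap_eq_two_mul_re ?_ Hc, ← ofReal_re (-4 * ‖deriv a w‖ ^ 2 / (1 - ‖a w‖ ^ 2) ^ 2),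
    ← re_ofReal_mul]
  · congr 1
    push_cast
    rw [← mul_conj', ← mul_conj']
    field_simp
    ring
  · filter_upwards [ha, hμ, hμ0, ha1] with z haz hμz hμ0z ha1z
    exact hasFDerivAt_log_conformalFactor haz hμz hμ0z ha1z

/-- Proposition 3.2, explicit form: for holomorphic data `a, μ` with `μ ≠ 0`
and `|a| < 1`, the normal Gauss map `τ = (1/(1−|a|²))·(1+|a|², a+conj a, −i(a−conj a), 0)`
satisfies the Weingarten equation `τ_w = η·conj(μ·W(a,a))` with
`η = a'/(conj μ · (1−|a|²)²)`, and `|η|² = |a'|²/(|μ|²(1−|a|²)⁴)` equals the Gauss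
curvature `K = −(1/λ²)Δ ln λ` where `λ² = 4|μ|²(1−|a|²)²`. -/
theorem stmt_3 (U : Set ℂ) (hU : IsOpen U) (a μ : ℂ → ℂ)
    (ha : ∀ w ∈ U, DifferentiableAt ℂ a w) (hμ : ∀ w ∈ U, DifferentiableAt ℂ μ w)
    (hμ0 : ∀ w ∈ U, μ w ≠ 0) (ha1 : ∀ w ∈ U, ‖a w‖ < 1)
    (τ : ℂ → Fin 4 → ℂ)
    (hτ : ∀ w, τ w = ((1 : ℂ) / (1 - (‖a w‖ : ℂ) ^ 2)) •
      ![1 + (‖a w‖ : ℂ) ^ 2, a w + conj (a w), -I * (a w - conj (a w)), 0])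
    (η : ℂ → ℂ)
    (hη : ∀ w, η w = deriv a w / (conj (μ w) * (1 - (‖a w‖ : ℂ) ^ 2) ^ 2))
    (lam : ℂ → ℝ)
    (hlam : ∀ w, lam w =
      Real.sqrt (4 * ‖μ w‖ ^ 2 * (1 - ‖a w‖ ^ 2) ^ 2)) :
    ∀ w ∈ U,
      wd τ w = η w • (fun i => conj ((μ w • W (a w) (a w)) i)) ∧
      ‖η w‖ ^ 2 =
        ‖deriv a w‖ ^ 2 /
          (‖μ w‖ ^ 2 * (1 - ‖a w‖ ^ 2) ^ 4) ∧
      ‖η w‖ ^ 2 =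
        -(1 / (lam w) ^ 2) * lap (fun z => Real.log (lam z)) w := by
  intro w hw
  obtain rfl : τ = normalGaussMap a := funext hτ
  obtain rfl : lam = fun z => √(4 * ‖μ z‖ ^ 2 * (1 - ‖a z‖ ^ 2) ^ 2) := funext hlam
  have hUw : ∀ᶠ z in 𝓝 w, z ∈ U := hU.mem_nhds hw
  have hs : 0 < 1 - ‖a w‖ ^ 2 := by nlinarith [ha1 w hw, norm_nonneg (a w)]
  have hμw : 0 < ‖μ w‖ := norm_pos_iff.2 (hμ0 w hw)
  have hη2 : ‖η w‖ ^ 2 = ‖deriv a w‖ ^ 2 / (‖μ w‖ ^ 2 * (1 - ‖a w‖ ^ 2) ^ 4) := by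
    rw [hη, ← ofReal_one, ← ofReal_pow, ← ofReal_sub, norm_div, norm_mul, norm_pow,
      norm_conj, norm_real, Real.norm_of_nonneg hs.le]
    field_simp
  refine ⟨?_, hη2, ?_⟩
  · rw [wd_normalGaussMap (ha w hw) (ha1 w hw), hη]
    ext i
    simp only [Pi.smul_apply, smul_eq_mul, map_mul]
    field_simp [(map_ne_zero _).2 (hμ0 w hw)]
  · rw [lap_log_conformalFactor (hUw.mono ha) (hUw.mono hμ) (hUw.mono hμ0) (hUw.mono ha1), hη2,
      Real.sq_sqrt (by positivity)]
    field_simp
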